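/- Let m ≥ 1 and N ≥ 1 be integers, h = 1/N, z ∈ ℝ, and let C ∈ ℝ^{N+1} satisfy Σ_{γ=0}^N C_γ (hγ)^α = z^α for α = 0,…,m−2 and Σ_{γ=0}^N C_γ e^{−hγ} = e^{−z}. Set D = (1/4) Σ_{γ=0}^N C_γ e^{hγ} and Q(x) = (1/2) Σ_{k=1}^{m−1} Σ_{α=0}^{min(2k−1, m−2)} (−1)^α z^α x^{2k−1−α} / ((2k−1−α)! · α!). Then there exists a polynomial R of degree at most m−2 (the zero polynomial when m = 1) such that: for all real x ≤ 0, Σ_{γ=0}^N C_γ G_m(x − hγ) = −(e^{x−z})/4 + D e^{−x} + Q(x) + R(x), and for all real x ≥ 1, Σ_{γ=0}^N C_γ G_m(x − hγ) = (e^{x−z})/4 − D e^{−x} − Q(x) − R(x). -/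
import Mathlib


/-- `G_m(x) = (sgn x)/2 · ((eˣ − e⁻ˣ)/2 − Σ_{k=1}^{m−1} x^{2k−1}/(2k−1)!)`, with
`sgn 0 = 0` and the sum empty for `m = 1`. -/
noncomputable def Gm (m : ℕ) (x : ℝ) : ℝ :=
  Real.sign x / 2 * ((Real.exp x - Real.exp (-x)) / 2
    - ∑ k ∈ Finset.range (m - 1), x ^ (2 * k + 1) / (Nat.factorial (2 * k + 1)))

open Finset

noncomputable def Em (m : ℕ) (t : ℝ) : ℝ :=
  (Real.exp t - Real.exp (-t)) / 2
    - ∑ k ∈ Finset.range (m - 1), t ^ (2 * k + 1) / (Nat.factorial (2 * k + 1))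

lemma Em_zero (m : ℕ) : Em m 0 = 0 := by
  simp [Em]

lemma Gm_nonpos (m : ℕ) {t : ℝ} (ht : t ≤ 0) : Gm m t = -(Em m t) / 2 := by
  rcases ht.lt_or_eq with h | h
  · rw [Gm, Real.sign_of_neg h]; rw [Em]; ring
  · subst h; rw [Gm, Em_zero]; simp [Real.sign_zero]

lemma Gm_nonneg (m : ℕ) {t : ℝ} (ht : 0 ≤ t) : Gm m t = Em m t / 2 := by
  rcases ht.lt_or_eq with h | h
  · rw [Gm, Real.sign_of_pos h]; rw [Em]; ring
  · rw [← h, Gm, Em_zero]; simp [Real.sign_zero]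

lemma poly_repr {ι : Type*} (S : Finset ι) (c : ι → ℝ) (e : ι → ℕ) (n : ℕ)
    (he : ∀ j ∈ S, e j < n) :
    ∃ r : ℕ → ℝ, ∀ x : ℝ,
      ∑ j ∈ S, c j * x ^ e j = ∑ i ∈ Finset.range n, r i * x ^ i := by
  refine ⟨fun i => ∑ j ∈ S, if e j = i then c j else 0, fun x => ?_⟩
  calc ∑ j ∈ S, c j * x ^ e j
      = ∑ j ∈ S, ∑ i ∈ Finset.range n, if e j = i then c j * x ^ i else 0 := by
        refine Finset.sum_congr rfl fun j hj => ?_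
        rw [Finset.sum_ite_eq (Finset.range n) (e j) (fun i => c j * x ^ i),
          if_pos (Finset.mem_range.mpr (he j hj))]
    _ = ∑ i ∈ Finset.range n, ∑ j ∈ S, if e j = i then c j * x ^ i else 0 :=
        Finset.sum_comm
    _ = ∑ i ∈ Finset.range n, (∑ j ∈ S, if e j = i then c j else 0) * x ^ i := by
        refine Finset.sum_congr rfl fun i _ => ?_
        rw [Finset.sum_mul]
        refine Finset.sum_congr rfl fun j _ => ?_
        split <;> simp

lemma sub_pow_div (a x : ℝ) (n : ℕ) :
    (x - a) ^ n / (Nat.factorial n : ℝ)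
      = ∑ α ∈ Finset.range (n + 1),
          (-1 : ℝ) ^ α * a ^ α * x ^ (n - α) /
            ((Nat.factorial (n - α) : ℝ) * (Nat.factorial α : ℝ)) := by
  have h1 : (x - a) ^ n = ∑ α ∈ Finset.range (n + 1),
      x ^ (n - α) * (-a) ^ α * (n.choose α : ℝ) := by
    rw [sub_eq_add_neg, add_pow, ← Finset.sum_range_reflect]
    refine Finset.sum_congr rfl fun α hα => ?_
    have hα' : α ≤ n := by simpa [Nat.lt_succ] using hα
    have e1 : n + 1 - 1 - α = n - α := by omega
    rw [e1, Nat.sub_sub_self hα', Nat.choose_symm hα']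
  rw [h1, Finset.sum_div]
  refine Finset.sum_congr rfl fun α hα => ?_
  have hα' : α ≤ n := by simpa [Nat.lt_succ] using hα
  have hfac : ((n.choose α : ℝ) * (Nat.factorial α : ℝ) * (Nat.factorial (n - α) : ℝ))
      = (Nat.factorial n : ℝ) := by
    exact_mod_cast congrArg (Nat.cast : ℕ → ℝ) (Nat.choose_mul_factorial_mul_factorial hα')
  have h2 : (-a) ^ α = (-1 : ℝ) ^ α * a ^ α := by rw [neg_pow]
  have hne1 : (Nat.factorial n : ℝ) ≠ 0 := Nat.cast_ne_zero.mpr (Nat.factorial_ne_zero n)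
  have hne2 : (Nat.factorial α : ℝ) ≠ 0 := Nat.cast_ne_zero.mpr (Nat.factorial_ne_zero α)
  have hne3 : (Nat.factorial (n - α) : ℝ) ≠ 0 := Nat.cast_ne_zero.mpr (Nat.factorial_ne_zero _)
  field_simp
  rw [h2, ← hfac]
  ring


/-- Representation of `Σ_γ C_γ G_m(x − hγ)` outside `[0,1]`: if `C` satisfies the
constraints `Σ_γ C_γ (hγ)^α = z^α` (α = 0,…,m−2) and `Σ_γ C_γ e^{−hγ} = e^{−z}`, and
`D = (1/4) Σ_γ C_γ e^{hγ}`,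
`Q(x) = (1/2) Σ_{k=1}^{m−1} Σ_{α=0}^{min(2k−1,m−2)} (−1)^α z^α x^{2k−1−α}/((2k−1−α)!·α!)`,
then there is a polynomial `R` of degree at most `m−2` (zero when `m = 1`) with
`Σ_γ C_γ G_m(x − hγ) = −e^{x−z}/4 + D e^{−x} + Q(x) + R(x)` for `x ≤ 0` and
`Σ_γ C_γ G_m(x − hγ) = e^{x−z}/4 − D e^{−x} − Q(x) − R(x)` for `x ≥ 1`. -/
theorem convolution_outside_interval (m N : ℕ) (hm : 1 ≤ m) (hN : 1 ≤ N)
    (z : ℝ) (C : ℕ → ℝ)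
    (hpoly : ∀ α < m - 1,
      ∑ γ ∈ Finset.range (N + 1), C γ * ((1 / N : ℝ) * γ) ^ α = z ^ α)
    (hexp : ∑ γ ∈ Finset.range (N + 1), C γ * Real.exp (-((1 / N : ℝ) * γ))
      = Real.exp (-z)) :
    ∃ r : ℕ → ℝ,
      (∀ x ≤ (0 : ℝ),
        ∑ γ ∈ Finset.range (N + 1), C γ * Gm m (x - (1 / N : ℝ) * γ)
          = -(Real.exp (x - z)) / 4
            + (1 / 4 * ∑ γ ∈ Finset.range (N + 1),
                C γ * Real.exp ((1 / N : ℝ) * γ)) * Real.exp (-x)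
            + (1 / 2 * ∑ k ∈ Finset.Icc 1 (m - 1),
                (∑ α ∈ Finset.range (min (2 * k - 1) (m - 2) + 1),
                  (-1 : ℝ) ^ α * z ^ α * x ^ (2 * k - 1 - α) /
                    (Nat.factorial (2 * k - 1 - α) * Nat.factorial α)))
            + ∑ i ∈ Finset.range (m - 1), r i * x ^ i) ∧
      (∀ x ≥ (1 : ℝ),
        ∑ γ ∈ Finset.range (N + 1), C γ * Gm m (x - (1 / N : ℝ) * γ)
          = Real.exp (x - z) / 4
            - (1 / 4 * ∑ γ ∈ Finset.range (N + 1),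
                C γ * Real.exp ((1 / N : ℝ) * γ)) * Real.exp (-x)
            - (1 / 2 * ∑ k ∈ Finset.Icc 1 (m - 1),
                (∑ α ∈ Finset.range (min (2 * k - 1) (m - 2) + 1),
                  (-1 : ℝ) ^ α * z ^ α * x ^ (2 * k - 1 - α) /
                    (Nat.factorial (2 * k - 1 - α) * Nat.factorial α)))
            - ∑ i ∈ Finset.range (m - 1), r i * x ^ i) := by
  set h : ℝ := (1 / N : ℝ) with hh
  have hNpos : (0:ℝ) < N := by exact_mod_cast hN
  have hhpos : 0 ≤ h := by positivity
  set s : ℕ → ℝ := fun α => ∑ γ ∈ Finset.range (N + 1), C γ * (h * γ) ^ α with hs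
  have hsz : ∀ α, α < m - 1 → s α = z ^ α := fun α hα => hpoly α hα
  set S : Finset ((_ : ℕ) × ℕ) :=
    (Finset.range (m - 1)).sigma
      (fun k => Finset.Ico (min (2 * k + 1) (m - 2) + 1) (2 * k + 2)) with hS
  obtain ⟨r0, hr0⟩ := poly_repr S
    (fun j => (-1 : ℝ) ^ j.2 * s j.2 /
      ((Nat.factorial (2 * j.1 + 1 - j.2) : ℝ) * (Nat.factorial j.2 : ℝ)))
    (fun j => 2 * j.1 + 1 - j.2) (m - 1)
    (by
      rintro ⟨k, α⟩ hj
      simp only [hS, Finset.mem_sigma, Finset.mem_range, Finset.mem_Ico] at hj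
      show 2 * k + 1 - α < m - 1
      omega)
  -- the key identity for all x
  have key : ∀ x : ℝ,
      ∑ γ ∈ Finset.range (N + 1), C γ * (Em m (x - h * γ) / 2)
        = Real.exp (x - z) / 4
          - (1 / 4 * ∑ γ ∈ Finset.range (N + 1), C γ * Real.exp (h * γ)) * Real.exp (-x)
          - (1 / 2 * ∑ k ∈ Finset.Icc 1 (m - 1),
              (∑ α ∈ Finset.range (min (2 * k - 1) (m - 2) + 1),
                (-1 : ℝ) ^ α * z ^ α * x ^ (2 * k - 1 - α) /
                  (Nat.factorial (2 * k - 1 - α) * Nat.factorial α)))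
          - ∑ i ∈ Finset.range (m - 1), (r0 i / 2) * x ^ i := by
    intro x
    have hA : ∑ γ ∈ Finset.range (N + 1), C γ * Real.exp (x - h * γ)
        = Real.exp (x - z) := by
      have e1 : ∀ γ : ℕ, C γ * Real.exp (x - h * γ)
          = Real.exp x * (C γ * Real.exp (-(h * γ))) := by
        intro γ
        rw [show x - h * γ = x + -(h * γ) by ring, Real.exp_add]; ring
      simp_rw [e1, ← Finset.mul_sum, hexp, ← Real.exp_add]
      ring_nf
    have hB : ∑ γ ∈ Finset.range (N + 1), C γ * Real.exp (-(x - h * γ))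
        = (∑ γ ∈ Finset.range (N + 1), C γ * Real.exp (h * γ)) * Real.exp (-x) := by
      rw [Finset.sum_mul]
      refine Finset.sum_congr rfl fun γ _ => ?_
      rw [mul_assoc, ← Real.exp_add, show h * (γ:ℝ) + -x = -(x - h * γ) by ring]
    -- polynomial part
    have hP : ∑ γ ∈ Finset.range (N + 1),
        C γ * (∑ k ∈ Finset.range (m - 1),
          (x - h * γ) ^ (2 * k + 1) / (Nat.factorial (2 * k + 1) : ℝ))
        = (∑ k ∈ Finset.Icc 1 (m - 1),
            (∑ α ∈ Finset.range (min (2 * k - 1) (m - 2) + 1),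
              (-1 : ℝ) ^ α * z ^ α * x ^ (2 * k - 1 - α) /
                (Nat.factorial (2 * k - 1 - α) * Nat.factorial α)))
          + ∑ i ∈ Finset.range (m - 1), r0 i * x ^ i := by
      have step1 : ∑ γ ∈ Finset.range (N + 1),
          C γ * (∑ k ∈ Finset.range (m - 1),
            (x - h * γ) ^ (2 * k + 1) / (Nat.factorial (2 * k + 1) : ℝ))
          = ∑ k ∈ Finset.range (m - 1), ∑ α ∈ Finset.range (2 * k + 2),
              (-1 : ℝ) ^ α * s α * x ^ (2 * k + 1 - α) /
                ((Nat.factorial (2 * k + 1 - α) : ℝ) * (Nat.factorial α : ℝ)) := by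
        simp_rw [Finset.mul_sum]
        rw [Finset.sum_comm]
        refine Finset.sum_congr rfl fun k _ => ?_
        simp_rw [sub_pow_div, Finset.mul_sum]
        rw [Finset.sum_comm]
        refine Finset.sum_congr rfl fun α _ => ?_
        simp only [hs]
        rw [Finset.mul_sum, Finset.sum_mul, Finset.sum_div]
        refine Finset.sum_congr rfl fun γ _ => ?_
        ring
      rw [step1]
      have step2 : ∀ k ∈ Finset.range (m - 1),
          ∑ α ∈ Finset.range (2 * k + 2),
            (-1 : ℝ) ^ α * s α * x ^ (2 * k + 1 - α) /
              ((Nat.factorial (2 * k + 1 - α) : ℝ) * (Nat.factorial α : ℝ))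
          = (∑ α ∈ Finset.range (min (2 * k + 1) (m - 2) + 1),
              (-1 : ℝ) ^ α * z ^ α * x ^ (2 * k + 1 - α) /
                ((Nat.factorial (2 * k + 1 - α) : ℝ) * (Nat.factorial α : ℝ)))
            + ∑ α ∈ Finset.Ico (min (2 * k + 1) (m - 2) + 1) (2 * k + 2),
              (-1 : ℝ) ^ α * s α * x ^ (2 * k + 1 - α) /
                ((Nat.factorial (2 * k + 1 - α) : ℝ) * (Nat.factorial α : ℝ)) := by
        intro k hk
        rw [Finset.mem_range] at hk
        rw [Finset.range_eq_Ico,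
          ← Finset.sum_Ico_consecutive
            (fun α => (-1 : ℝ) ^ α * s α * x ^ (2 * k + 1 - α) /
              ((Nat.factorial (2 * k + 1 - α) : ℝ) * (Nat.factorial α : ℝ)))
            (by omega : 0 ≤ min (2 * k + 1) (m - 2) + 1)
            (by omega : min (2 * k + 1) (m - 2) + 1 ≤ 2 * k + 2)]
        congr 1
        rw [← Finset.range_eq_Ico]
        refine Finset.sum_congr rfl fun α hα => ?_
        rw [Finset.mem_range] at hα
        rw [hsz α (by omega)]
      rw [Finset.sum_congr rfl step2, Finset.sum_add_distrib]
      congr 1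
      · have hIcc : Finset.Icc 1 (m - 1) = Finset.Ico 1 m := by
          rw [← Finset.Ico_add_one_right_eq_Icc]
          congr 1
          omega
        rw [hIcc, Finset.sum_Ico_eq_sum_range]
        rw [show m - 1 = m - 1 from rfl]
        refine (Finset.sum_congr rfl fun k _ => ?_).symm
        have e1 : 2 * (1 + k) - 1 = 2 * k + 1 := by omega
        rw [e1]
      · rw [← hr0 x, hS, Finset.sum_sigma]
        refine Finset.sum_congr rfl fun k _ => Finset.sum_congr rfl fun α _ => ?_
        dsimp only
        ring
    calc ∑ γ ∈ Finset.range (N + 1), C γ * (Em m (x - h * γ) / 2)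
        = (∑ γ ∈ Finset.range (N + 1), C γ * Real.exp (x - h * γ)) / 4
          - (∑ γ ∈ Finset.range (N + 1), C γ * Real.exp (-(x - h * γ))) / 4
          - (∑ γ ∈ Finset.range (N + 1),
              C γ * (∑ k ∈ Finset.range (m - 1),
                (x - h * γ) ^ (2 * k + 1) / (Nat.factorial (2 * k + 1) : ℝ))) / 2 := by
          rw [Finset.sum_div, Finset.sum_div, Finset.sum_div,
            ← Finset.sum_sub_distrib, ← Finset.sum_sub_distrib]
          refine Finset.sum_congr rfl fun γ _ => ?_
          rw [Em]
          ring
      _ = _ := by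
          rw [hA, hB, hP,
            show ∑ i ∈ Finset.range (m - 1), (r0 i / 2) * x ^ i
              = (∑ i ∈ Finset.range (m - 1), r0 i * x ^ i) / 2 by
              rw [Finset.sum_div]; exact Finset.sum_congr rfl fun i _ => by ring]
          ring
  refine ⟨fun i => r0 i / 2, fun x hx => ?_, fun x hx => ?_⟩
  · have hGm : ∀ γ ∈ Finset.range (N + 1),
        C γ * Gm m (x - h * γ) = -(C γ * (Em m (x - h * γ) / 2)) := by
      intro γ _
      have hγ : (0:ℝ) ≤ h * γ := mul_nonneg hhpos (Nat.cast_nonneg γ)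
      rw [Gm_nonpos m (by linarith : x - h * γ ≤ 0)]
      ring
    rw [Finset.sum_congr rfl hGm, Finset.sum_neg_distrib, key x]
    ring
  · have hGm : ∀ γ ∈ Finset.range (N + 1),
        C γ * Gm m (x - h * γ) = C γ * (Em m (x - h * γ) / 2) := by
      intro γ hγ
      rw [Finset.mem_range] at hγ
      have h1 : (γ:ℝ) ≤ N := by exact_mod_cast Nat.lt_succ_iff.mp hγ
      have h2 : h * γ ≤ 1 := by
        rw [hh]
        rw [div_mul_eq_mul_div, div_le_one hNpos]
        linarith
      rw [Gm_nonneg m (by linarith : (0:ℝ) ≤ x - h * γ)]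
    rw [Finset.sum_congr rfl hGm, key x]
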